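/- arXiv:1506.02629 — 2 statements merged into one kernel-verified Lean document; each statement's English description precedes it below -/
import Mathlib

section
/- Let A be an ε-differentially private randomized algorithm with domain 𝒳^n and finite range 𝒴. Then the (pure) max-information of A satisfies I_∞(A,n) ≤ (log e) · ε n. -/
open scoped ENNReal

/-- Probability of an event under a PMF. -/
noncomputable def pr {Z : Type*} (p : PMF Z) (O : Set Z) : ℝ≥0∞ :=
  p.toOuterMeasure O

/-- Product of two independent PMFs. -/
noncomputable def pmfPair {A B : Type*} (p : PMF A) (q : PMF B) : PMF (A × B) :=
  p.bind fun a => q.map fun b => (a, b)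

/-- Joint distribution of (input, output). -/
noncomputable def joint {A B : Type*} (μ : PMF A) (f : A → PMF B) : PMF (A × B) :=
  μ.bind fun a => (f a).map fun b => (a, b)

/-- Product of the marginals of input and output. -/
noncomputable def indepProd {A B : Type*} (μ : PMF A) (f : A → PMF B) : PMF (A × B) :=
  pmfPair μ (μ.bind f)

/-- `D_∞^δ(p ‖ q) ≤ k` (δ-approximate max-divergence, log base 2). -/
def approxDivLe {Z : Type*} (p q : PMF Z) (δ k : ℝ) : Prop :=
  ∀ O : Set Z, ENNReal.ofReal δ < pr p O →
    pr p O - ENNReal.ofReal δ ≤ (2 : ℝ≥0∞) ^ k * pr q O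

/-- `I_∞^β(S; f(S)) ≤ k` for `S ∼ μ`. -/
def approxMaxInfoLe {A B : Type*} (μ : PMF A) (f : A → PMF B) (β k : ℝ) : Prop :=
  approxDivLe (joint μ f) (indepProd μ f) β k

/-- Two datasets are adjacent if they differ in a single element. -/
def Adjacent {X : Type*} {n : ℕ} (S S' : Fin n → X) : Prop :=
  ∃ i : Fin n, ∀ j : Fin n, j ≠ i → S j = S' j

/-- ε-differential privacy: for all adjacent datasets `S, S'` and every output `y`,
`Pr[A(S) = y] ≤ e^ε · Pr[A(S') = y]`. -/
def DiffPrivate {X Y : Type*} {n : ℕ} (A : (Fin n → X) → PMF Y) (ε : ℝ) : Prop :=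
  ∀ S S' : Fin n → X, Adjacent S S' → ∀ y : Y,
    A S y ≤ ENNReal.ofReal (Real.exp ε) * A S' y

/-- `D_∞(p ‖ q) ≤ k` (max-divergence, log base 2). -/
def divLe {Z : Type*} (p q : PMF Z) (k : ℝ) : Prop :=
  ∀ z : Z, p z ≤ (2 : ℝ≥0∞) ^ k * q z

/-- `I_∞(S; f(S)) ≤ k` for `S ∼ μ`. -/
def maxInfoLe {A B : Type*} (μ : PMF A) (f : A → PMF B) (k : ℝ) : Prop :=
  divLe (joint μ f) (indepProd μ f) k

/-- `I_∞(A, n) ≤ k`: the bound holds for every distribution over datasets. -/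
def algMaxInfoLe {X Y : Type*} (n : ℕ) (A : (Fin n → X) → PMF Y) (k : ℝ) : Prop :=
  ∀ μ : PMF (Fin n → X), maxInfoLe μ A k


private lemma joint_apply' {A B : Type*} (μ : PMF A) (f : A → PMF B) (a : A) (b : B) :
    joint μ f (a, b) = μ a * f a b := by
  simp only [joint, PMF.bind_apply, PMF.map_apply]
  rw [tsum_eq_single a]
  · rw [tsum_eq_single b]
    · simp
    · intro b' hb'; simp [Prod.ext_iff, hb'.symm]
  · intro a' ha'
    rw [tsum_eq_single b]
    · simp [Prod.ext_iff, ha'.symm]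
    · intro b' hb'; simp [Prod.ext_iff, hb'.symm]

private lemma indepProd_apply' {A B : Type*} (μ : PMF A) (f : A → PMF B) (a : A) (b : B) :
    indepProd μ f (a, b) = μ a * ∑' a', μ a' * f a' b := by
  have h : indepProd μ f (a, b) = joint μ (fun _ => μ.bind f) (a, b) := by
    simp [indepProd, pmfPair, joint]
  rw [h, joint_apply']
  simp [PMF.bind_apply]

private lemma group_privacy {X Y : Type*} {n : ℕ} (A : (Fin n → X) → PMF Y) (ε : ℝ)
    (hA : DiffPrivate A ε) (S S' : Fin n → X) (y : Y) :
    A S y ≤ ENNReal.ofReal (Real.exp (ε * n)) * A S' y := by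
  set T : ℕ → (Fin n → X) := fun k j => if (j : ℕ) < k then S' j else S j with hT
  have key : ∀ k : ℕ, k ≤ n → A S y ≤ ENNReal.ofReal (Real.exp (ε * k)) * A (T k) y := by
    intro k
    induction k with
    | zero =>
      intro _
      have h0 : T 0 = S := by funext j; simp [hT]
      simp [h0]
    | succ k ih =>
      intro hk
      have hk' : k < n := hk
      have hadj : Adjacent (T k) (T (k + 1)) := by
        refine ⟨⟨k, hk'⟩, fun j hj => ?_⟩
        have hjk : (j : ℕ) ≠ k := by
          intro h; exact hj (Fin.ext h)
        simp only [hT]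
        rcases lt_or_gt_of_ne hjk with h | h
        · simp [h, Nat.lt_succ_of_lt h]
        · simp [Nat.not_lt.2 h.le, Nat.not_lt.2 h]
      push_cast
      calc A S y ≤ ENNReal.ofReal (Real.exp (ε * k)) * A (T k) y := ih (le_of_lt hk')
        _ ≤ ENNReal.ofReal (Real.exp (ε * k)) *
            (ENNReal.ofReal (Real.exp ε) * A (T (k + 1)) y) := by
              exact mul_le_mul_right (hA _ _ hadj y) _
        _ = ENNReal.ofReal (Real.exp (ε * ((k : ℝ) + 1))) * A (T (k + 1)) y := by
              rw [← mul_assoc, ← ENNReal.ofReal_mul (Real.exp_nonneg _), ← Real.exp_add]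
              congr 2
              ring
  have hfin := key n le_rfl
  have hTn : T n = S' := by
    funext j; simp [hT, j.isLt]
  rwa [hTn] at hfin

private lemma two_rpow_eq (ε : ℝ) (n : ℕ) :
    (2 : ℝ≥0∞) ^ (Real.logb 2 (Real.exp 1) * ε * n) = ENNReal.ofReal (Real.exp (ε * n)) := by
  rw [show ((2:ℝ≥0∞)) = ENNReal.ofReal 2 by norm_num,
    ENNReal.ofReal_rpow_of_pos (by norm_num)]
  congr 1
  rw [mul_assoc, Real.rpow_mul (by norm_num),
    Real.rpow_logb (by norm_num) (by norm_num) (Real.exp_pos 1), Real.exp_one_rpow]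

/-- an ε-differentially private algorithm satisfies
`I_∞(A, n) ≤ (log₂ e) · ε · n`. -/
theorem maxInfo_of_pure_dp
    {X Y : Type*} [Fintype X] [Fintype Y] {n : ℕ}
    (A : (Fin n → X) → PMF Y) (ε : ℝ) (hA : DiffPrivate A ε) :
    algMaxInfoLe n A (Real.logb 2 (Real.exp 1) * ε * n) := by
  intro μ
  rintro ⟨s, y⟩
  rw [joint_apply', indepProd_apply', two_rpow_eq]
  have h : A s y ≤ ENNReal.ofReal (Real.exp (ε * n)) * ∑' s', μ s' * A s' y := by
    have h1 : A s y = ∑' s', μ s' * A s y := by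
      rw [ENNReal.tsum_mul_right, μ.tsum_coe, one_mul]
    rw [h1, ← ENNReal.tsum_mul_left]
    refine ENNReal.tsum_le_tsum fun s' => ?_
    calc μ s' * A s y
        ≤ μ s' * (ENNReal.ofReal (Real.exp (ε * n)) * A s' y) :=
          mul_le_mul_right (group_privacy A ε hA s s' y) _
      _ = ENNReal.ofReal (Real.exp (ε * n)) * (μ s' * A s' y) := by ring
  calc μ s * A s y
      ≤ μ s * (ENNReal.ofReal (Real.exp (ε * n)) * ∑' s', μ s' * A s' y) :=
        mul_le_mul_right h _
    _ = ENNReal.ofReal (Real.exp (ε * n)) * (μ s * ∑' s', μ s' * A s' y) := by ring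
end

section
/- Let A be a randomized algorithm that takes a dataset in 𝒳^n and outputs a function f : 𝒳^n → ℝ of sensitivity c, with the output ranging over a finite set of such functions. Let S be a random dataset chosen according to the product distribution 𝒫^n over 𝒳^n and let f = A(S). (i) If for β ≥ 0 and τ > 0 the β-approximate max-information satisfies I_∞^β(S; f) ≤ (log e) · τ²/(c² n), then Pr[ f(S) − E_{S'∼𝒫^n}[f(S')] ≥ τ ] ≤ exp( −τ²/(c² n) ) + β. (ii) In particular, if A is τ²/(c² n²)-differentially private then Pr[ f(S) − E_{S'∼𝒫^n}[f(S')] ≥ τ ] ≤ exp( −τ²/(c² n) ). -/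
/-!
Under the product of the marginals, `S` is independent of the chosen function, so McDiarmid's
inequality bounds the bad event by `exp (-2τ²/(c²n))`; McDiarmid itself follows from
Hoeffding's lemma applied to one coordinate at a time. An approximate max-information bound
`log₂ e · τ²/(c²n)` transfers this to the joint law at the price of a factor `exp (τ²/(c²n))`
and an additive `β`. For `τ²/(c²n²)`-differential privacy, group privacy across all `n`
coordinates gives `A S f ≤ exp (τ²/(c²n)) · A S' f` for every `S'`, so the joint law is
pointwise at most `exp (τ²/(c²n))` times the product law.
-/

open scoped ENNReal

/-- The distribution of `n` i.i.d. samples from `P`. -/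
noncomputable def iid {X : Type*} (P : PMF X) : (n : ℕ) → PMF (Fin n → X)
  | 0 => PMF.pure fun i => i.elim0
  | n + 1 => (iid P n).bind fun S => P.map fun x => Fin.cons x S

/-- A function `f : 𝒳^n → ℝ` has sensitivity `c`: changing a single coordinate
changes the value by at most `c`. -/
def Sensitivity {X : Type*} {n : ℕ} (f : (Fin n → X) → ℝ) (c : ℝ) : Prop :=
  ∀ (S : Fin n → X) (i : Fin n) (x' : X), f S - f (Function.update S i x') ≤ c

/-- The expectation of `g` under a PMF `μ` on a finite type. -/
noncomputable def pmfExp {Z : Type*} [Fintype Z] (μ : PMF Z) (g : Z → ℝ) : ℝ :=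
  ∑ z : Z, (μ z).toReal * g z

open Real

section PMFExpectation

variable {Z : Type*} [Fintype Z]

lemma pmfExp_mono (μ : PMF Z) {g h : Z → ℝ} (hgh : ∀ z, g z ≤ h z) :
    pmfExp μ g ≤ pmfExp μ h :=
  Finset.sum_le_sum fun z _ => mul_le_mul_of_nonneg_left (hgh z) ENNReal.toReal_nonneg

lemma pmfExp_const_mul (μ : PMF Z) (a : ℝ) (g : Z → ℝ) :
    pmfExp μ (fun z => a * g z) = a * pmfExp μ g := by
  simp only [pmfExp, Finset.mul_sum]
  exact Finset.sum_congr rfl fun z _ => mul_left_comm _ _ _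

lemma pmfExp_eq_integral [MeasurableSpace Z] [MeasurableSingletonClass Z] (μ : PMF Z)
    (g : Z → ℝ) : pmfExp μ g = ∫ z, g z ∂μ.toMeasure := by
  simp [pmfExp, PMF.integral_eq_sum]

lemma pmfExp_pure (a : Z) (g : Z → ℝ) : pmfExp (PMF.pure a) g = g a := by
  classical
  rw [pmfExp, Fintype.sum_eq_single a fun z hz => by simp [PMF.pure_apply_of_ne _ _ hz]]
  simp

lemma pmfExp_bind {W : Type*} [Fintype W] (μ : PMF W) (K : W → PMF Z) (g : Z → ℝ) :
    pmfExp (μ.bind K) g = pmfExp μ fun w => pmfExp (K w) g := by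
  simp only [pmfExp, PMF.bind_apply, tsum_fintype, Finset.mul_sum]
  rw [Finset.sum_comm]
  refine Finset.sum_congr rfl fun z _ => ?_
  rw [ENNReal.toReal_sum fun w _ => ENNReal.mul_ne_top (μ.apply_ne_top w) ((K w).apply_ne_top z),
    Finset.sum_mul]
  simp only [ENNReal.toReal_mul, mul_assoc]

lemma pmfExp_map {W : Type*} [Fintype W] (μ : PMF W) (f : W → Z) (g : Z → ℝ) :
    pmfExp (μ.map f) g = pmfExp μ (g ∘ f) := by
  rw [← PMF.bind_pure_comp, pmfExp_bind]
  simp [pmfExp_pure, Function.comp_def]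

lemma pr_eq_ofReal_pmfExp_indicator (μ : PMF Z) (O : Set Z) :
    pr μ O = ENNReal.ofReal (pmfExp μ (O.indicator 1)) := by
  rw [pr, PMF.toOuterMeasure_apply_fintype, pmfExp, ENNReal.ofReal_sum_of_nonneg]
  · refine Finset.sum_congr rfl fun z _ => ?_
    by_cases hz : z ∈ O <;> simp [hz, μ.apply_ne_top]
  · exact fun z _ =>
      mul_nonneg ENNReal.toReal_nonneg (Set.indicator_nonneg (fun _ _ => zero_le_one) z)

lemma pmfExp_add_const (μ : PMF Z) (g : Z → ℝ) (a : ℝ) :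
    pmfExp μ (fun z => g z + a) = pmfExp μ g + a := by
  have hsum : ∑ z, (μ z).toReal = 1 := by
    rw [← ENNReal.toReal_sum fun z _ => μ.apply_ne_top z,
      ← tsum_fintype (L := SummationFilter.unconditional Z), μ.tsum_coe, ENNReal.toReal_one]
  simp only [pmfExp, mul_add, Finset.sum_add_distrib, ← Finset.sum_mul, hsum, one_mul]

end PMFExpectation

section Concentration

variable {Z : Type*} [Fintype Z]

lemma pr_le_exp_mul_pmfExp (μ : PMF Z) (Y : Z → ℝ) {t : ℝ} (ht : 0 ≤ t) (τ : ℝ) :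
    pr μ {z | τ ≤ Y z}
      ≤ ENNReal.ofReal (exp (-(t * τ)) * pmfExp μ fun z => exp (t * Y z)) := by
  rw [pr_eq_ofReal_pmfExp_indicator, ← pmfExp_const_mul]
  refine ENNReal.ofReal_le_ofReal (pmfExp_mono μ fun z => ?_)
  rw [← exp_add]
  by_cases hz : τ ≤ Y z
  · rw [Set.indicator_of_mem (show z ∈ {z | τ ≤ Y z} from hz), Pi.one_apply]
    exact one_le_exp (by nlinarith)
  · rw [Set.indicator_of_notMem (show z ∉ {z | τ ≤ Y z} from hz)]
    exact (exp_pos _).le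

lemma pmfExp_exp_mul_sub_pmfExp_le_of_sub_le (μ : PMF Z) {Y : Z → ℝ} {c : ℝ}
    (hY : ∀ z z', Y z - Y z' ≤ c) (t : ℝ) :
    pmfExp μ (fun z => exp (t * (Y z - pmfExp μ Y))) ≤ exp (t ^ 2 * c ^ 2 / 8) := by
  let _ : MeasurableSpace Z := ⊤
  have : MeasurableSingletonClass Z := ⟨fun _ => trivial⟩
  have hne : (Finset.univ : Finset Z).Nonempty := ⟨_, Finset.mem_univ μ.support_nonempty.some⟩
  obtain ⟨z₀, -, hz₀⟩ := Finset.exists_mem_eq_inf' hne Y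
  have hmem : ∀ z, Y z ∈ Set.Icc (Y z₀) (Y z₀ + c) := fun z =>
    ⟨hz₀ ▸ Finset.inf'_le _ (Finset.mem_univ z), by linarith [hY z z₀]⟩
  have hsub := (ProbabilityTheory.hasSubgaussianMGF_of_mem_Icc (μ := μ.toMeasure)
    (measurable_of_finite Y).aemeasurable (MeasureTheory.ae_of_all _ hmem)).mgf_le t
  simp only [ProbabilityTheory.mgf, ← pmfExp_eq_integral] at hsub
  convert hsub using 2
  simp only [add_sub_cancel_left, NNReal.coe_pow, NNReal.coe_div, coe_nnnorm, Real.norm_eq_abs,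
    NNReal.coe_ofNat, div_pow, sq_abs]
  ring

end Concentration

section McDiarmid

lemma Sensitivity.sub_le_of_cons {X : Type*} {n : ℕ} {g : (Fin (n + 1) → X) → ℝ} {c : ℝ}
    (hg : Sensitivity g c) (S : Fin n → X) (x y : X) :
    g (Fin.cons x S) - g (Fin.cons y S) ≤ c := by
  simpa [Fin.update_cons_zero] using hg (Fin.cons x S) 0 y

variable {X : Type*} [Fintype X]

lemma pmfExp_iid_succ (P : PMF X) (n : ℕ) (g : (Fin (n + 1) → X) → ℝ) :
    pmfExp (iid P (n + 1)) g
      = pmfExp (iid P n) fun S => pmfExp P fun x => g (Fin.cons x S) := by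
  simp only [iid, pmfExp_bind, pmfExp_map, Function.comp_def]

lemma Sensitivity.pmfExp_cons {n : ℕ} {g : (Fin (n + 1) → X) → ℝ} {c : ℝ} (hg : Sensitivity g c)
    (P : PMF X) : Sensitivity (fun S => pmfExp P fun x => g (Fin.cons x S)) c := by
  intro S i x'
  suffices pmfExp P (fun x => g (Fin.cons x S))
      ≤ pmfExp P (fun x => g (Fin.cons x (Function.update S i x'))) + c by linarith
  rw [← pmfExp_add_const]
  refine pmfExp_mono P fun x => ?_
  have := hg (Fin.cons x S) i.succ x'
  rw [← Fin.cons_update] at this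
  linarith

lemma pmfExp_iid_exp_mul_sub_le (P : PMF X) {n : ℕ} {g : (Fin n → X) → ℝ} {c : ℝ}
    (hg : Sensitivity g c) (t : ℝ) :
    pmfExp (iid P n) (fun S => exp (t * (g S - pmfExp (iid P n) g)))
      ≤ exp (t ^ 2 * (n * c ^ 2) / 8) := by
  induction n with
  | zero => simp [iid, pmfExp_pure]
  | succ n ih =>
    set h : (Fin n → X) → ℝ := fun S => pmfExp P fun x => g (Fin.cons x S)
    have hE : pmfExp (iid P (n + 1)) g = pmfExp (iid P n) h := pmfExp_iid_succ P n g
    have hstep : ∀ S, (pmfExp P fun x => exp (t * (g (Fin.cons x S) - pmfExp (iid P n) h)))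
        ≤ exp (t ^ 2 * c ^ 2 / 8) * exp (t * (h S - pmfExp (iid P n) h)) := by
      intro S
      have hsplit : ∀ x, exp (t * (g (Fin.cons x S) - pmfExp (iid P n) h))
          = exp (t * (h S - pmfExp (iid P n) h)) * exp (t * (g (Fin.cons x S) - h S)) := by
        intro x
        rw [← exp_add]
        ring_nf
      simp only [hsplit, pmfExp_const_mul]
      rw [mul_comm]
      exact mul_le_mul_of_nonneg_right
        (pmfExp_exp_mul_sub_pmfExp_le_of_sub_le P (hg.sub_le_of_cons S) t) (exp_pos _).le
    calc pmfExp (iid P (n + 1)) (fun S => exp (t * (g S - pmfExp (iid P (n + 1)) g)))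
        = pmfExp (iid P n) (fun S =>
            pmfExp P fun x => exp (t * (g (Fin.cons x S) - pmfExp (iid P n) h))) := by
          rw [pmfExp_iid_succ, hE]
      _ ≤ exp (t ^ 2 * c ^ 2 / 8)
            * pmfExp (iid P n) (fun S => exp (t * (h S - pmfExp (iid P n) h))) := by
          rw [← pmfExp_const_mul]
          exact pmfExp_mono _ hstep
      _ ≤ exp (t ^ 2 * c ^ 2 / 8) * exp (t ^ 2 * (n * c ^ 2) / 8) :=
          mul_le_mul_of_nonneg_left (ih (hg.pmfExp_cons P)) (exp_pos _).le
      _ = exp (t ^ 2 * ((n + 1 : ℕ) * c ^ 2) / 8) := by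
          rw [← exp_add]
          push_cast
          ring_nf

lemma pr_iid_le_of_sensitivity (P : PMF X) {n : ℕ} {g : (Fin n → X) → ℝ} {c : ℝ}
    (hg : Sensitivity g c) {τ : ℝ} (hτ : 0 ≤ τ) :
    pr (iid P n) {S | τ ≤ g S - pmfExp (iid P n) g}
      ≤ ENNReal.ofReal (exp (-2 * τ ^ 2 / (n * c ^ 2))) := by
  set t := 4 * τ / (n * c ^ 2)
  have ht : 0 ≤ t := by positivity
  refine (pr_le_exp_mul_pmfExp _ _ ht τ).trans (ENNReal.ofReal_le_ofReal ?_)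
  calc exp (-(t * τ)) * pmfExp (iid P n) (fun S => exp (t * (g S - pmfExp (iid P n) g)))
      ≤ exp (-(t * τ)) * exp (t ^ 2 * (n * c ^ 2) / 8) :=
        mul_le_mul_of_nonneg_left (pmfExp_iid_exp_mul_sub_le P hg t) (exp_pos _).le
    _ = exp (-2 * τ ^ 2 / (n * c ^ 2)) := by
        rw [← exp_add]
        congr 1
        rcases eq_or_ne ((n : ℝ) * c ^ 2) 0 with h | h
        · -- then `t = 0` and both exponents vanish, by the convention `x / 0 = 0`
          simp [t, h]
        · simp only [t]
          field_simp
          ring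

end McDiarmid

section JointDistribution

variable {A B : Type*}

lemma pr_le_mul_pr {p q : PMF A} {C : ℝ≥0∞} (h : ∀ a, p a ≤ C * q a) (O : Set A) :
    pr p O ≤ C * pr q O := by
  simp only [pr, PMF.toOuterMeasure_apply, ← ENNReal.tsum_mul_left]
  exact ENNReal.tsum_le_tsum fun a => by by_cases ha : a ∈ O <;> simp [ha, h a]

lemma pr_joint_le_mul_pr_joint (μ : PMF A) {K L : A → PMF B} {C : ℝ≥0∞}
    (h : ∀ a b, K a b ≤ C * L a b) (O : Set (A × B)) :
    pr (joint μ K) O ≤ C * pr (joint μ L) O := by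
  simp only [pr, joint, PMF.toOuterMeasure_bind_apply, PMF.toOuterMeasure_map_apply,
    ← ENNReal.tsum_mul_left]
  refine ENNReal.tsum_le_tsum fun a => ?_
  rw [mul_left_comm]
  exact mul_le_mul_right (pr_le_mul_pr (h a) _) _

lemma pmfPair_eq_bind_map (p : PMF A) (q : PMF B) :
    pmfPair p q = q.bind fun b => p.map fun a => (a, b) := by
  simp only [pmfPair, ← PMF.bind_pure_comp]
  exact PMF.bind_comm p q _

lemma pr_pmfPair_le_of_forall (p : PMF A) (q : PMF B) {O : Set (A × B)} {M : ℝ≥0∞}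
    (h : ∀ b, pr p {a | (a, b) ∈ O} ≤ M) : pr (pmfPair p q) O ≤ M := by
  rw [pmfPair_eq_bind_map]
  simp only [pr, PMF.toOuterMeasure_bind_apply, PMF.toOuterMeasure_map_apply] at h ⊢
  calc ∑' b, q b * p.toOuterMeasure ((fun a => (a, b)) ⁻¹' O) ≤ ∑' b, q b * M :=
        ENNReal.tsum_le_tsum fun b => mul_le_mul_right (h b) _
    _ = M := by rw [ENNReal.tsum_mul_right, q.tsum_coe, one_mul]

lemma approxDivLe.pr_le {p q : PMF A} {δ k : ℝ} (h : approxDivLe p q δ k) (O : Set A) :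
    pr p O ≤ 2 ^ k * pr q O + ENNReal.ofReal δ := by
  by_cases hO : pr p O ≤ ENNReal.ofReal δ
  · exact le_add_left hO
  · exact tsub_le_iff_right.mp (h O (not_le.mp hO))

end JointDistribution

namespace DiffPrivate

variable {X Y : Type*} {n : ℕ} {A : (Fin n → X) → PMF Y} {ε : ℝ}

lemma apply_le_of_eq_of_notMem (hA : DiffPrivate A ε) (s : Finset (Fin n)) {S S' : Fin n → X}
    (hSS' : ∀ j ∉ s, S j = S' j) (y : Y) :
    A S y ≤ ENNReal.ofReal (exp (s.card * ε)) * A S' y := by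
  induction s using Finset.induction_on generalizing S with
  | empty =>
    obtain rfl : S = S' := funext fun j => hSS' j (Finset.notMem_empty j)
    simp
  | insert i s hi ih =>
    set T := Function.update S i (S' i)
    have hT : ∀ j ∉ s, T j = S' j := fun j hj => by
      by_cases hji : j = i
      · simp [T, hji]
      · simp only [T, Function.update_of_ne hji]
        exact hSS' j (by simp [hji, hj])
    calc A S y ≤ ENNReal.ofReal (exp ε) * A T y :=
          hA S T ⟨i, fun j hj => (Function.update_of_ne hj _ _).symm⟩ y
      _ ≤ ENNReal.ofReal (exp ε) * (ENNReal.ofReal (exp (s.card * ε)) * A S' y) :=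
          mul_le_mul_right (ih hT) _
      _ = ENNReal.ofReal (exp ((insert i s).card * ε)) * A S' y := by
          rw [← mul_assoc, ← ENNReal.ofReal_mul (exp_pos _).le, ← exp_add,
            Finset.card_insert_of_notMem hi]
          push_cast
          ring_nf

lemma apply_le_bind (hA : DiffPrivate A ε) (μ : PMF (Fin n → X)) (S : Fin n → X) (y : Y) :
    A S y ≤ ENNReal.ofReal (exp (n * ε)) * μ.bind A y := by
  have hgroup : ∀ S', A S y ≤ ENNReal.ofReal (exp (n * ε)) * A S' y := fun S' => by
    simpa using hA.apply_le_of_eq_of_notMem Finset.univ (S := S) (S' := S') (by simp) y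
  calc A S y = ∑' S', μ S' * A S y := by rw [ENNReal.tsum_mul_right, μ.tsum_coe, one_mul]
    _ ≤ ∑' S', μ S' * (ENNReal.ofReal (exp (n * ε)) * A S' y) :=
        ENNReal.tsum_le_tsum fun S' => mul_le_mul_right (hgroup S') _
    _ = ENNReal.ofReal (exp (n * ε)) * μ.bind A y := by
        rw [PMF.bind_apply, ← ENNReal.tsum_mul_left]
        exact tsum_congr fun S' => mul_left_comm _ _ _

lemma pr_joint_le (hA : DiffPrivate A ε) (μ : PMF (Fin n → X)) (O : Set ((Fin n → X) × Y)) :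
    pr (joint μ A) O ≤ ENNReal.ofReal (exp (n * ε)) * pr (indepProd μ A) O :=
  pr_joint_le_mul_pr_joint μ (hA.apply_le_bind μ) O

end DiffPrivate

lemma two_rpow_logb_exp_mul (x : ℝ) :
    (2 : ℝ≥0∞) ^ (logb 2 (exp 1) * x) = ENNReal.ofReal (exp x) := by
  rw [← ENNReal.ofReal_ofNat 2, ENNReal.ofReal_rpow_of_pos two_pos, rpow_mul zero_le_two,
    rpow_logb two_pos (by norm_num) (exp_pos 1), exp_one_rpow]

theorem maxInfo_low_sensitivity_generalization_general
    {X F : Type*} [Fintype X] {n : ℕ}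
    (ev : F → (Fin n → X) → ℝ) (c : ℝ)
    (hsens : ∀ f : F, Sensitivity (ev f) c)
    (P : PMF X) (A : (Fin n → X) → PMF F) (τ β : ℝ) (hτ : 0 < τ) (hβ : 0 ≤ β) :
    (approxMaxInfoLe (iid P n) A β
        (Real.logb 2 (Real.exp 1) * τ ^ 2 / (c ^ 2 * n)) →
      pr (joint (iid P n) A)
          {p : (Fin n → X) × F | τ ≤ ev p.2 p.1 - pmfExp (iid P n) (ev p.2)}
        ≤ ENNReal.ofReal (Real.exp (-(τ ^ 2) / (c ^ 2 * n)) + β)) ∧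
    (DiffPrivate A (τ ^ 2 / (c ^ 2 * n ^ 2)) →
      pr (joint (iid P n) A)
          {p : (Fin n → X) × F | τ ≤ ev p.2 p.1 - pmfExp (iid P n) (ev p.2)}
        ≤ ENNReal.ofReal (Real.exp (-(τ ^ 2) / (c ^ 2 * n)))) := by
  set O := {p : (Fin n → X) × F | τ ≤ ev p.2 p.1 - pmfExp (iid P n) (ev p.2)}
  have hindep : pr (indepProd (iid P n) A) O ≤ ENNReal.ofReal (exp (-2 * τ ^ 2 / (n * c ^ 2))) :=
    pr_pmfPair_le_of_forall _ _ fun f => pr_iid_le_of_sensitivity P (hsens f) hτ.le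
  have hexp : ENNReal.ofReal (exp (τ ^ 2 / (c ^ 2 * n)))
        * ENNReal.ofReal (exp (-2 * τ ^ 2 / (n * c ^ 2)))
      = ENNReal.ofReal (exp (-(τ ^ 2) / (c ^ 2 * n))) := by
    rw [← ENNReal.ofReal_mul (exp_pos _).le, ← exp_add]
    ring_nf
  refine ⟨fun hmax => ?_, fun hdp => ?_⟩
  · calc pr (joint (iid P n) A) O
        ≤ 2 ^ (logb 2 (exp 1) * τ ^ 2 / (c ^ 2 * n)) * pr (indepProd (iid P n) A) O
          + ENNReal.ofReal β := hmax.pr_le O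
      _ ≤ ENNReal.ofReal (exp (-(τ ^ 2) / (c ^ 2 * n))) + ENNReal.ofReal β := by
          rw [mul_div_assoc, two_rpow_logb_exp_mul, ← hexp]
          gcongr
      _ = _ := (ENNReal.ofReal_add (exp_pos _).le hβ).symm
  · have hε : (n : ℝ) * (τ ^ 2 / (c ^ 2 * n ^ 2)) = τ ^ 2 / (c ^ 2 * n) := by
      rcases eq_or_ne (n : ℝ) 0 with h | h
      · simp [h]
      · field_simp
    calc pr (joint (iid P n) A) O
        ≤ ENNReal.ofReal (exp (τ ^ 2 / (c ^ 2 * n))) * pr (indepProd (iid P n) A) O := by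
          simpa only [hε] using hdp.pr_joint_le (iid P n) O
      _ ≤ _ := by
          rw [← hexp]
          gcongr

/-- let `A` be a randomized algorithm outputting (a name `f : F` of) a
`c`-sensitive function `ev f : 𝒳^n → ℝ` from a finite set `F` of such functions,
and let `S ∼ 𝒫^n`, `f = A(S)`.
(i) If `I_∞^β(S; f) ≤ (log₂ e) · τ²/(c²n)` for `β ≥ 0`, `τ > 0`, then
`Pr[ f(S) − E_{S'∼𝒫^n}[f(S')] ≥ τ ] ≤ exp(−τ²/(c²n)) + β`.
(ii) In particular, if `A` is `τ²/(c²n²)`-differentially private then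
`Pr[ f(S) − E_{S'∼𝒫^n}[f(S')] ≥ τ ] ≤ exp(−τ²/(c²n))`. -/
theorem maxInfo_low_sensitivity_generalization
    {X F : Type*} [Fintype X] [Fintype F] {n : ℕ}
    (ev : F → (Fin n → X) → ℝ) (c : ℝ)
    (hsens : ∀ f : F, Sensitivity (ev f) c)
    (P : PMF X) (A : (Fin n → X) → PMF F) (τ β : ℝ) (hτ : 0 < τ) (hβ : 0 ≤ β) :
    (approxMaxInfoLe (iid P n) A β
        (Real.logb 2 (Real.exp 1) * τ ^ 2 / (c ^ 2 * n)) →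
      pr (joint (iid P n) A)
          {p : (Fin n → X) × F | τ ≤ ev p.2 p.1 - pmfExp (iid P n) (ev p.2)}
        ≤ ENNReal.ofReal (Real.exp (-(τ ^ 2) / (c ^ 2 * n)) + β)) ∧
    (DiffPrivate A (τ ^ 2 / (c ^ 2 * n ^ 2)) →
      pr (joint (iid P n) A)
          {p : (Fin n → X) × F | τ ≤ ev p.2 p.1 - pmfExp (iid P n) (ev p.2)}
        ≤ ENNReal.ofReal (Real.exp (-(τ ^ 2) / (c ^ 2 * n)))) :=
  maxInfo_low_sensitivity_generalization_general ev c hsens P A τ β hτ hβ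
end
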